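/- arXiv:1603.09275 — 2 statements merged into one kernel-verified Lean document; each statement's English description precedes it below -/
import Mathlib

section
/- A Brandt semigroup B(G, I) has the Howson property if and only if the group G has the Howson property. -/
inductive InvGen {S : Type*} [Mul S] [Inv S] (X : Set S) : S → Prop
  | base {x : S} : x ∈ X → InvGen X x
  | mul {a b : S} : InvGen X a → InvGen X b → InvGen X (a * b)
  | inv {a : S} : InvGen X a → InvGen X a⁻¹

def IsInvSub {S : Type*} [Mul S] [Inv S] (T : Set S) : Prop :=
  (∀ a ∈ T, ∀ b ∈ T, a * b ∈ T) ∧ ∀ a ∈ T, a⁻¹ ∈ T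

def InvFG {S : Type*} [Mul S] [Inv S] (T : Set S) : Prop :=
  ∃ X : Finset S, ↑X ⊆ T ∧ T = {s | InvGen (↑X : Set S) s}

def Howson (S : Type*) [Mul S] [Inv S] : Prop :=
  ∀ U V : Set S, IsInvSub U → IsInvSub V → InvFG U → InvFG V → InvFG (U ∩ V)
abbrev Brandt (G I : Type*) := Option (I × G × I)

open Classical in
noncomputable instance {G I : Type*} [Group G] : Mul (Brandt G I) :=
  ⟨fun a b =>
    match a, b with
    | some (i, g, j), some (j', h, k) => if j = j' then some (i, g * h, k) else none
    | _, _ => none⟩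

instance {G I : Type*} [Group G] : Inv (Brandt G I) :=
  ⟨fun a =>
    match a with
    | some (i, g, j) => some (j, g⁻¹, i)
    | none => none⟩
def HowsonGroup (G : Type*) [Group G] : Prop :=
  ∀ H K : Subgroup G, H.FG → K.FG → (H ⊓ K).FG

/-!
Call the indices `i` with `(i, g, i) ∈ T` the support of an inverse subsemigroup `T` of `B(G, I)`,
and `{g | (i, g, i) ∈ T}` its local group at `i`. Then `T` is finitely generated iff its support
is finite and all its local groups are finitely generated. Given generators, fix `(i, c a, a) ∈ T`
for every `a` linked to `i`: the map `(a, g, b) ↦ c a * g * (c b)⁻¹` sends products of generators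
to telescoping products, so the images of the generators generate the local group at `i`.
Conversely, one element of `T` over each linked pair of indices together with generators of the
local groups generate `T`.

Local groups of `U ∩ V` are intersections of local groups of `U` and `V`, and a subgroup `H` sits
in `B(G, I)` as `{(i, h, i) | h ∈ H}`, whose only local group is `H`.
-/

section InverseSubsemigroup

variable {S : Type*} [Mul S] [Inv S] {T X : Set S}

theorem IsInvSub.inter {U : Set S} (hT : IsInvSub T) (hU : IsInvSub U) : IsInvSub (T ∩ U) :=
  ⟨fun a ha b hb => ⟨hT.1 a ha.1 b hb.1, hU.1 a ha.2 b hb.2⟩,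
    fun a ha => ⟨hT.2 a ha.1, hU.2 a ha.2⟩⟩

theorem IsInvSub.mem_of_invGen (hT : IsInvSub T) (hXT : X ⊆ T) {s : S} (hs : InvGen X s) :
    s ∈ T := by
  induction hs with
  | base hx => exact hXT hx
  | mul _ _ ha hb => exact hT.1 _ ha _ hb
  | inv _ ha => exact hT.2 _ ha

theorem invFG_of_finite_generators (hT : IsInvSub T) (hX : X.Finite) (hXT : X ⊆ T)
    (hTX : ∀ t ∈ T, InvGen X t) : InvFG T :=
  ⟨hX.toFinset, by simpa using hXT, by
    ext t
    simpa using ⟨hTX t, hT.mem_of_invGen hXT⟩⟩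

end InverseSubsemigroup

namespace Brandt

variable {G I : Type*} {T : Set (Brandt G I)}

def Linked (T : Set (Brandt G I)) (a b : I) : Prop := ∃ g : G, some (a, g, b) ∈ T

def support (T : Set (Brandt G I)) : Set I := {i | Linked T i i}

theorem support_mono {U : Set (Brandt G I)} (h : T ⊆ U) : support T ⊆ support U :=
  fun _ ⟨g, hg⟩ => ⟨g, h hg⟩

def endpoints : Brandt G I → Set I
  | some (a, _, b) => {a, b}
  | none => ∅

theorem finite_endpoints (t : Brandt G I) : (endpoints t).Finite := by
  rcases t with _ | ⟨a, g, b⟩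
  · exact Set.finite_empty
  · exact (Set.finite_singleton b).insert a

variable [Group G]

@[simp] theorem some_mul_some (i j k : I) (g h : G) :
    (some (i, g, j) : Brandt G I) * some (j, h, k) = some (i, g * h, k) :=
  if_pos rfl

theorem some_mul_some_of_ne {i j j' k : I} (g h : G) (hj : j ≠ j') :
    (some (i, g, j) : Brandt G I) * some (j', h, k) = none :=
  if_neg hj

@[simp] theorem inv_some (i j : I) (g : G) :
    (some (i, g, j) : Brandt G I)⁻¹ = some (j, g⁻¹, i) := rfl

theorem eq_some_of_mul_eq_some {a b : Brandt G I} {i k : I} {g : G}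
    (h : a * b = some (i, g, k)) :
    ∃ g₁ j g₂, a = some (i, g₁, j) ∧ b = some (j, g₂, k) ∧ g = g₁ * g₂ := by
  rcases a with _ | ⟨i', g₁, j⟩
  · simp at h
  rcases b with _ | ⟨j', g₂, k'⟩
  · simp at h
  obtain rfl | hj := eq_or_ne j j'
  · simp only [some_mul_some, Option.some.injEq, Prod.mk.injEq] at h
    obtain ⟨rfl, rfl, rfl⟩ := h
    exact ⟨g₁, j, g₂, rfl, rfl, rfl⟩
  · simp [some_mul_some_of_ne g₁ g₂ hj] at h

theorem eq_some_of_inv_eq_some {a : Brandt G I} {i j : I} {g : G} (h : a⁻¹ = some (i, g, j)) :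
    a = some (j, g⁻¹, i) := by
  rcases a with _ | ⟨i', g', j'⟩
  · simp at h
  · simp only [inv_some, Option.some.injEq, Prod.mk.injEq] at h
    obtain ⟨rfl, rfl, rfl⟩ := h
    simp

theorem Linked.symm (hT : IsInvSub T) {a b : I} (h : Linked T a b) : Linked T b a :=
  let ⟨g, hg⟩ := h
  ⟨g⁻¹, hT.2 _ hg⟩

theorem Linked.trans (hT : IsInvSub T) {a b c : I} (hab : Linked T a b) (hbc : Linked T b c) :
    Linked T a c :=
  let ⟨g, hg⟩ := hab
  let ⟨h, hh⟩ := hbc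
  ⟨g * h, by simpa using hT.1 _ hg _ hh⟩

theorem Linked.mem_support_left (hT : IsInvSub T) {a b : I} (h : Linked T a b) :
    a ∈ support T :=
  h.trans hT (h.symm hT)

theorem Linked.mem_support_right (hT : IsInvSub T) {a b : I} (h : Linked T a b) :
    b ∈ support T :=
  (h.symm hT).trans hT h

theorem one_mem_of_mem_support (hT : IsInvSub T) {i : I} (hi : i ∈ support T) :
    some (i, (1 : G), i) ∈ T := by
  obtain ⟨g, hg⟩ := hi
  simpa using hT.1 _ hg _ (hT.2 _ hg)

def localGroup (hT : IsInvSub T) {i : I} (hi : i ∈ support T) : Subgroup G where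
  carrier := {g | some (i, g, i) ∈ T}
  one_mem' := one_mem_of_mem_support hT hi
  mul_mem' ha hb := by simpa using hT.1 _ ha _ hb
  inv_mem' ha := by simpa using hT.2 _ ha

theorem mem_localGroup (hT : IsInvSub T) {i : I} (hi : i ∈ support T) {g : G} :
    g ∈ localGroup hT hi ↔ some (i, g, i) ∈ T := Iff.rfl

theorem localGroup_inter {U V : Set (Brandt G I)} (hU : IsInvSub U) (hV : IsInvSub V) {i : I}
    (hi : i ∈ support (U ∩ V)) :
    localGroup (hU.inter hV) hi =
      localGroup hU (support_mono Set.inter_subset_left hi) ⊓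
        localGroup hV (support_mono Set.inter_subset_right hi) :=
  rfl

theorem exists_linking_elements (T : Set (Brandt G I)) :
    ∃ c : I → I → G, ∀ a b, Linked T a b → some (a, c a b, b) ∈ T := by
  classical
  exact ⟨fun a b => if h : Linked T a b then h.choose else 1,
    fun a b h => by simpa only [dif_pos h] using h.choose_spec⟩

theorem mem_endpoints_of_invGen {X : Set (Brandt G I)} {t : Brandt G I} (ht : InvGen X t) :
    ∀ {a g b}, t = some (a, g, b) → a ∈ ⋃ x ∈ X, endpoints x ∧ b ∈ ⋃ x ∈ X, endpoints x := by
  induction ht with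
  | base hx =>
    rintro a g b rfl
    exact ⟨Set.mem_biUnion hx (by simp [endpoints]), Set.mem_biUnion hx (by simp [endpoints])⟩
  | mul _ _ ih₁ ih₂ =>
    intro a g b hab
    obtain ⟨g₁, j, g₂, rfl, rfl, rfl⟩ := eq_some_of_mul_eq_some hab
    exact ⟨(ih₁ rfl).1, (ih₂ rfl).2⟩
  | inv _ ih =>
    intro a g b hab
    obtain ⟨h₁, h₂⟩ := ih (eq_some_of_inv_eq_some hab)
    exact ⟨h₂, h₁⟩

theorem support_finite_of_invFG (hT : InvFG T) : (support T).Finite := by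
  obtain ⟨X, -, rfl⟩ := hT
  refine (X.finite_toSet.biUnion fun x _ => finite_endpoints x).subset ?_
  rintro i ⟨g, hg⟩
  exact (mem_endpoints_of_invGen hg rfl).1

/-- Transports `(a, g, b)` into the local group at `i` along `(i, c a, a)` and `(i, c b, b)`. -/
def toLocal (c : I → G) : Brandt G I → G
  | some (a, g, b) => c a * g * (c b)⁻¹
  | none => 1

theorem toLocal_mem_closure {X : Set (Brandt G I)} (hT : IsInvSub T) (hXT : X ⊆ T) {i : I}
    {c : I → G} (hc : ∀ j, Linked T i j → some (i, c j, j) ∈ T) {t : Brandt G I}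
    (ht : InvGen X t) : ∀ {a g b}, t = some (a, g, b) → Linked T i a →
      c a * g * (c b)⁻¹ ∈ Subgroup.closure ({h | some (i, h, i) ∈ T} ∩ toLocal c '' X) := by
  induction ht with
  | base hx =>
    rintro a g b rfl hia
    have hib : Linked T i b := hia.trans hT ⟨g, hXT hx⟩
    refine Subgroup.subset_closure ⟨?_, _, hx, rfl⟩
    simpa [mul_assoc] using hT.1 _ (hT.1 _ (hc a hia) _ (hXT hx)) _ (hT.2 _ (hc b hib))
  | @mul u v hu _ ih₁ ih₂ =>
    intro a g b hab hia
    obtain ⟨g₁, j, g₂, rfl, rfl, rfl⟩ := eq_some_of_mul_eq_some hab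
    have hij : Linked T i j := hia.trans hT ⟨g₁, hT.mem_of_invGen hXT hu⟩
    convert mul_mem (ih₁ rfl hia) (ih₂ rfl hij) using 1
    group
  | @inv u hu ih =>
    intro a g b hab hia
    have hu' := eq_some_of_inv_eq_some hab
    have hib : Linked T i b := hia.trans hT (Linked.symm hT ⟨g⁻¹, hu' ▸ hT.mem_of_invGen hXT hu⟩)
    convert inv_mem (ih hu' hib) using 1
    group

theorem localGroup_fg_of_invFG (hT : IsInvSub T) (hfg : InvFG T) {i : I} (hi : i ∈ support T) :
    (localGroup hT hi).FG := by
  obtain ⟨X, hXT, hTX⟩ := hfg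
  obtain ⟨c, hc⟩ := exists_linking_elements T
  let S : Set G := {h | some (i, h, i) ∈ T} ∩ toLocal (c i) '' X
  have hSfin : S.Finite := (X.finite_toSet.image (toLocal (c i))).subset Set.inter_subset_right
  refine (Subgroup.fg_iff _).2 ⟨S, le_antisymm ?_ fun g hg => ?_, hSfin⟩
  · exact (Subgroup.closure_le _).2 Set.inter_subset_left
  · have hci := hc i i hi
    have hconj : some (i, (c i i)⁻¹ * g * c i i, i) ∈ T := by
      simpa [mul_assoc] using hT.1 _ (hT.1 _ (hT.2 _ hci) _ hg) _ hci
    rw [hTX] at hconj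
    simpa [mul_assoc] using toLocal_mem_closure hT hXT (hc i) hconj rfl hi

theorem invGen_some_of_mem_closure {X : Set (Brandt G I)} {i : I} {k : G}
    (hk : InvGen X (some (i, k, i))) {S : Set G} (hS : ∀ h ∈ S, InvGen X (some (i, h, i)))
    {g : G} (hg : g ∈ Subgroup.closure S) : InvGen X (some (i, g, i)) := by
  induction hg using Subgroup.closure_induction with
  | mem h hh => exact hS h hh
  | one => simpa using InvGen.mul hk (InvGen.inv hk)
  | mul _ _ _ _ ih₁ ih₂ => simpa using InvGen.mul ih₁ ih₂
  | inv _ _ ih => simpa using InvGen.inv ih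

theorem invGen_of_mem {X : Set (Brandt G I)} (hT : IsInvSub T) (hXT : X ⊆ T)
    (hlink : ∀ a b, Linked T a b → ∃ k, some (a, k, b) ∈ X)
    (hloc : ∀ i (hi : i ∈ support T), ∀ g ∈ localGroup hT hi, InvGen X (some (i, g, i)))
    {a b : I} {g : G} (h : some (a, g, b) ∈ T) : InvGen X (some (a, g, b)) := by
  obtain ⟨k, hk⟩ := hlink a b ⟨g, h⟩
  have hb : b ∈ support T := Linked.mem_support_right hT ⟨g, h⟩
  have hrest : k⁻¹ * g ∈ localGroup hT hb := by
    rw [mem_localGroup]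
    simpa using hT.1 _ (hT.2 _ (hXT hk)) _ h
  simpa using InvGen.mul (InvGen.base hk) (hloc b hb _ hrest)

theorem invFG_of_support_finite (hT : IsInvSub T) (hfin : (support T).Finite)
    (hfg : ∀ i (hi : i ∈ support T), (localGroup hT hi).FG) : InvFG T := by
  choose S hS hSfin using fun i hi => (Subgroup.fg_iff _).1 (hfg i hi)
  obtain ⟨c, hc⟩ := exists_linking_elements T
  have hlinked : {p : I × I | Linked T p.1 p.2}.Finite :=
    (hfin.prod hfin).subset fun p hp => ⟨hp.mem_support_left hT, hp.mem_support_right hT⟩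
  have hSmem : ∀ i hi, ∀ h ∈ S i hi, some (i, h, i) ∈ T := fun i hi h hh => by
    rw [← mem_localGroup hT hi, ← hS i hi]
    exact Subgroup.subset_closure hh
  let X : Set (Brandt G I) := ({none} ∩ T) ∪
    (fun p : I × I => some (p.1, c p.1 p.2, p.2)) '' {p | Linked T p.1 p.2} ∪
    ⋃ i ∈ support T, (fun h => some (i, h, i)) '' S i ‹_›
  have hXT : X ⊆ T := by
    rintro t ((⟨-, ht⟩ | ⟨p, hp, rfl⟩) | ht)
    · exact ht
    · exact hc _ _ hp
    · simp only [Set.mem_iUnion] at ht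
      obtain ⟨i, hi, h, hh, rfl⟩ := ht
      exact hSmem i hi h hh
  refine invFG_of_finite_generators hT ?_ hXT ?_
  · exact ((Set.finite_singleton none).inter_of_left T).union (hlinked.image _) |>.union
      (hfin.biUnion' fun i hi => (hSfin i hi).image _)
  · rintro (_ | ⟨a, g, b⟩) ht
    · exact InvGen.base (Or.inl (Or.inl ⟨rfl, ht⟩))
    refine invGen_of_mem hT hXT (fun a b hab => ⟨_, Or.inl (Or.inr ⟨(a, b), hab, rfl⟩)⟩) ?_ ht
    intro i hi g hg
    rw [← hS i hi] at hg
    refine invGen_some_of_mem_closure (InvGen.base (Or.inl (Or.inr ⟨(i, i), hi, rfl⟩))) ?_ hg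
    exact fun h hh => InvGen.base (Or.inr (Set.mem_iUnion₂.2 ⟨i, hi, h, hh, rfl⟩))

theorem invFG_iff (hT : IsInvSub T) :
    InvFG T ↔ (support T).Finite ∧ ∀ i (hi : i ∈ support T), (localGroup hT hi).FG :=
  ⟨fun h => ⟨support_finite_of_invFG h, fun _ hi => localGroup_fg_of_invFG hT h hi⟩,
    fun h => invFG_of_support_finite hT h.1 h.2⟩

def diag (H : Subgroup G) (i : I) : Set (Brandt G I) :=
  (fun h => some (i, h, i)) '' (H : Set G)

theorem isInvSub_diag (H : Subgroup G) (i : I) : IsInvSub (diag H i) := by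
  constructor
  · rintro _ ⟨g, hg, rfl⟩ _ ⟨h, hh, rfl⟩
    exact ⟨g * h, H.mul_mem hg hh, by simp⟩
  · rintro _ ⟨g, hg, rfl⟩
    exact ⟨g⁻¹, H.inv_mem hg, rfl⟩

theorem diag_inter (H K : Subgroup G) (i : I) : diag H i ∩ diag K i = diag (H ⊓ K) i :=
  (Set.image_inter fun _ _ h => by simpa using h).symm

theorem support_diag (H : Subgroup G) (i : I) : support (diag H i) = {i} := by
  ext j
  constructor
  · rintro ⟨g, h, -, hh⟩
    simp only [Option.some.injEq, Prod.mk.injEq] at hh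
    exact hh.1.symm
  · rintro rfl
    exact ⟨1, 1, H.one_mem, rfl⟩

theorem localGroup_diag (H : Subgroup G) (i : I) (hi : i ∈ support (diag H i)) :
    localGroup (isInvSub_diag H i) hi = H := by
  ext g
  simp [mem_localGroup, diag]

theorem invFG_diag_iff (H : Subgroup G) (i : I) : InvFG (diag H i) ↔ H.FG := by
  have hi : i ∈ support (diag H i) := by simp [support_diag]
  rw [invFG_iff (isInvSub_diag H i)]
  refine ⟨fun h => localGroup_diag H i hi ▸ h.2 i hi, fun h => ⟨by simp [support_diag], ?_⟩⟩
  intro j hj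
  obtain rfl : j = i := by simpa [support_diag] using hj
  rwa [localGroup_diag]

end Brandt

open Brandt in
theorem stmt_1 {G I : Type*} [Group G] [Nonempty I] :
    Howson (Brandt G I) ↔ HowsonGroup G := by
  constructor
  · intro hB H K hH hK
    obtain ⟨i⟩ := ‹Nonempty I›
    have := hB _ _ (isInvSub_diag H i) (isInvSub_diag K i) ((invFG_diag_iff H i).2 hH)
      ((invFG_diag_iff K i).2 hK)
    rwa [diag_inter, invFG_diag_iff] at this
  · intro hG U V hU hV hUfg hVfg
    rw [invFG_iff hU] at hUfg
    rw [invFG_iff hV] at hVfg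
    refine (invFG_iff (hU.inter hV)).2
      ⟨hUfg.1.subset (support_mono Set.inter_subset_left), fun i hi => ?_⟩
    rw [localGroup_inter hU hV hi]
    exact hG _ _ (hUfg.2 _ _) (hVfg.2 _ _)
end

section
/- Let S be an inverse semigroup with finitely many idempotents. Then S has the Howson property if and only if every maximal subgroup of S (i.e., every group ℋ-class H_e for an idempotent e) has the Howson property. -/
class InverseSemigroup (S : Type*) extends Semigroup S, Inv S where
  mul_inv_mul : ∀ a : S, a * a⁻¹ * a = a
  inv_invol : ∀ a : S, a⁻¹⁻¹ = a
  idem_comm : ∀ a b : S, (a * a⁻¹) * (b * b⁻¹) = (b * b⁻¹) * (a * a⁻¹)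

/-- The Howson property for an inverse subsemigroup `H` (in particular for a
maximal subgroup, regarded as an inverse semigroup). -/
def HowsonOn {S : Type*} [Mul S] [Inv S] (H : Set S) : Prop :=
  ∀ U V : Set S, U ⊆ H → V ⊆ H → IsInvSub U → IsInvSub V → InvFG U → InvFG V → InvFG (U ∩ V)

/-!
Finitely many idempotents make both reductions finite. An inverse subsemigroup `T` is generated
by one element `r` of each nonempty set `{r ∈ T | r r⁻¹ = e, r⁻¹ r = f}` together with generators
of the groups `T ∩ H_f`, because `t = r (r⁻¹ t)` with `r⁻¹ t ∈ H_{t⁻¹ t}`. Conversely, if `T` is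
generated by a finite set `X`, then `T ∩ H_e` is generated by the finitely many Schreier elements
`ρ(f) y ρ(f')⁻¹` with `y ∈ X ∪ X⁻¹`, where `ρ(f) ∈ T` is chosen with `ρ(f) ρ(f)⁻¹ = e` and
`ρ(f)⁻¹ ρ(f) = f`: reading a word for `t ∈ H_e` letter by letter, every prefix `u` of `e t` stays
in the `ℛ`-class of `e`, and `u ρ(u)⁻¹` changes by one Schreier element per letter. So
`(U ∩ V) ∩ H_e = (U ∩ H_e) ∩ (V ∩ H_e)` is finitely generated whenever `H_e` is Howson.
-/

theorem IsInvSub.inter_s4 {S : Type*} [Mul S] [Inv S] {U V : Set S} (hU : IsInvSub U)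
    (hV : IsInvSub V) : IsInvSub (U ∩ V) :=
  ⟨fun a ha b hb => ⟨hU.1 a ha.1 b hb.1, hV.1 a ha.2 b hb.2⟩,
    fun a ha => ⟨hU.2 a ha.1, hV.2 a ha.2⟩⟩

namespace InvGen

variable {S : Type*} [Mul S] [Inv S] {X Y T : Set S} {s : S}

theorem mono (hXY : X ⊆ Y) (h : InvGen X s) : InvGen Y s := by
  induction h with
  | base hx => exact base (hXY hx)
  | mul _ _ iha ihb => exact mul iha ihb
  | inv _ ih => exact inv ih

theorem mem (hXT : X ⊆ T) (hT : IsInvSub T) (h : InvGen X s) : s ∈ T := by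
  induction h with
  | base hx => exact hXT hx
  | mul _ _ iha ihb => exact hT.1 _ iha _ ihb
  | inv _ ih => exact hT.2 _ ih

end InvGen

theorem invFG_of_finite {S : Type*} [Mul S] [Inv S] {X T : Set S} (hX : X.Finite)
    (hXT : X ⊆ T) (hT : IsInvSub T) (hgen : ∀ t ∈ T, InvGen X t) : InvFG T :=
  ⟨hX.toFinset, by rwa [hX.coe_toFinset], by
    rw [hX.coe_toFinset]; exact Set.ext fun t => ⟨hgen t, InvGen.mem hXT hT⟩⟩

namespace InverseSemigroup

variable {S : Type*} [InverseSemigroup S]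

theorem inv_mul_inv (a : S) : a⁻¹ * a * a⁻¹ = a⁻¹ := by
  simpa only [inv_invol] using mul_inv_mul a⁻¹

theorem isIdempotentElem_mul_inv (a : S) : IsIdempotentElem (a * a⁻¹) := by
  rw [IsIdempotentElem, ← mul_assoc, mul_inv_mul]

theorem isIdempotentElem_inv_mul (a : S) : IsIdempotentElem (a⁻¹ * a) := by
  simpa only [inv_invol] using isIdempotentElem_mul_inv a⁻¹

theorem commute_inv_mul_mul_inv (a b : S) : Commute (a⁻¹ * a) (b * b⁻¹) := by
  simpa only [commute_iff_eq, inv_invol] using idem_comm a⁻¹ b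

-- `e⁻¹ = (e⁻¹ e)(e e⁻¹)` is a product of commuting idempotents, hence itself idempotent.
theorem inv_eq_self_of_isIdempotentElem {e : S} (he : IsIdempotentElem e) : e⁻¹ = e := by
  have split : ∀ {f : S}, IsIdempotentElem f → f⁻¹ = f⁻¹ * f * (f * f⁻¹) := fun {f} hf =>
    calc f⁻¹ = f⁻¹ * (f * f) * f⁻¹ := by rw [hf, inv_mul_inv]
      _ = f⁻¹ * f * (f * f⁻¹) := by simp only [mul_assoc]
  have he' : IsIdempotentElem e⁻¹ := by
    rw [split he]
    exact (isIdempotentElem_inv_mul e).mul_of_commute (commute_inv_mul_mul_inv e e)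
      (isIdempotentElem_mul_inv e)
  calc e⁻¹ = e⁻¹ * e * (e * e⁻¹) := split he
    _ = e⁻¹⁻¹ * e⁻¹ * (e⁻¹ * e⁻¹⁻¹) := by rw [(commute_inv_mul_mul_inv e e).eq, inv_invol]
    _ = e := by rw [← split he', inv_invol]

theorem mul_inv_of_isIdempotentElem {e : S} (he : IsIdempotentElem e) : e * e⁻¹ = e := by
  rw [inv_eq_self_of_isIdempotentElem he, he]

theorem commute_of_isIdempotentElem {e f : S} (he : IsIdempotentElem e)
    (hf : IsIdempotentElem f) : Commute e f := by
  simpa only [commute_iff_eq, mul_inv_of_isIdempotentElem he, mul_inv_of_isIdempotentElem hf]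
    using idem_comm e f

theorem inv_eq_of_mul_mul_eq {a b : S} (hab : a * b * a = a) (hba : b * a * b = b) :
    a⁻¹ = b := by
  have hab' : IsIdempotentElem (a * b) := by rw [IsIdempotentElem, ← mul_assoc, hab]
  have hba' : IsIdempotentElem (b * a) := by rw [IsIdempotentElem, ← mul_assoc, hba]
  calc a⁻¹ = a⁻¹ * (a * b * (a * a⁻¹)) := by
        rw [← mul_assoc (a * b), hab, ← mul_assoc, inv_mul_inv]
    _ = a⁻¹ * (a * a⁻¹ * (a * b)) := by
      rw [(commute_of_isIdempotentElem hab' (isIdempotentElem_mul_inv a)).eq]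
    _ = a⁻¹ * a * b := by rw [← mul_assoc (a * a⁻¹), mul_inv_mul, ← mul_assoc]
    _ = a⁻¹ * a * (b * a) * b := by rw [mul_assoc _ (b * a), hba]
    _ = b * a * (a⁻¹ * a) * b := by
      rw [(commute_of_isIdempotentElem hba' (isIdempotentElem_inv_mul a)).eq]
    _ = b := by rw [mul_assoc b a, ← mul_assoc a, mul_inv_mul, hba]

protected theorem mul_inv_rev (a b : S) : (a * b)⁻¹ = b⁻¹ * a⁻¹ := by
  refine inv_eq_of_mul_mul_eq ?_ ?_
  · calc a * b * (b⁻¹ * a⁻¹) * (a * b) = a * (a⁻¹ * a * (b * b⁻¹)) * b := by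
          rw [(commute_inv_mul_mul_inv a b).eq]; simp only [mul_assoc]
      _ = a * b := by
        rw [← mul_assoc a, ← mul_assoc a a⁻¹, mul_inv_mul, mul_assoc, mul_inv_mul]
  · calc b⁻¹ * a⁻¹ * (a * b) * (b⁻¹ * a⁻¹) = b⁻¹ * (b * b⁻¹ * (a⁻¹ * a)) * a⁻¹ := by
          rw [← (commute_inv_mul_mul_inv a b).eq]; simp only [mul_assoc]
      _ = b⁻¹ * a⁻¹ := by
        rw [← mul_assoc b⁻¹, ← mul_assoc b⁻¹ b, inv_mul_inv, mul_assoc, inv_mul_inv]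

-- In the natural order of idempotents, `(a b)(a b)⁻¹ ≤ a a⁻¹ ≤ e`.
theorem mul_inv_eq_of_mul_mul_inv_eq {a b e : S} (he : IsIdempotentElem e)
    (ha : e * a = a) (hab : a * b * (a * b)⁻¹ = e) : a * a⁻¹ = e :=
  calc a * a⁻¹ = e * (a * a⁻¹) := by rw [← mul_assoc, ha]
    _ = a * a⁻¹ * (a * b * (a * b)⁻¹) := by
      rw [(commute_of_isIdempotentElem he (isIdempotentElem_mul_inv a)).eq, hab]
    _ = e := by rw [← mul_assoc, ← mul_assoc, mul_inv_mul, hab]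

def maxSubgroup (e : S) : Set S := {s | s * s⁻¹ = e ∧ s⁻¹ * s = e}

theorem mul_inv_mem_maxSubgroup {u v e : S} (hu : u * u⁻¹ = e) (hv : v * v⁻¹ = e)
    (huv : u⁻¹ * u = v⁻¹ * v) : u * v⁻¹ ∈ maxSubgroup e := by
  refine ⟨?_, ?_⟩ <;> rw [InverseSemigroup.mul_inv_rev, inv_invol]
  · rw [mul_assoc, ← mul_assoc v⁻¹, ← huv, inv_mul_inv, hu]
  · rw [mul_assoc, ← mul_assoc u⁻¹, huv, inv_mul_inv, hv]

theorem inv_mul_mem_maxSubgroup {u v f : S} (hu : u⁻¹ * u = f) (hv : v⁻¹ * v = f)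
    (huv : u * u⁻¹ = v * v⁻¹) : u⁻¹ * v ∈ maxSubgroup f := by
  simpa only [inv_invol] using
    mul_inv_mem_maxSubgroup (u := u⁻¹) (v := v⁻¹) (by rwa [inv_invol]) (by rwa [inv_invol])
      (by rwa [inv_invol, inv_invol])

theorem mul_inv_mul_of_inv_mul_eq {u v : S} (huv : u⁻¹ * u = v⁻¹ * v) :
    u * v⁻¹ * v = u := by
  rw [mul_assoc, ← huv, ← mul_assoc, mul_inv_mul]

theorem mul_mul_inv_of_mem_maxSubgroup {g u e : S} (hg : g ∈ maxSubgroup e)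
    (hu : u * u⁻¹ = e) : g * u * (g * u)⁻¹ = e := by
  calc g * u * (g * u)⁻¹ = g * (u * u⁻¹) * g⁻¹ := by
        rw [InverseSemigroup.mul_inv_rev]; simp only [mul_assoc]
    _ = g * g⁻¹ * g * g⁻¹ := by rw [hu, ← hg.2]; simp only [mul_assoc]
    _ = e := by rw [mul_inv_mul, hg.1]

theorem inv_mul_of_mem_maxSubgroup {g u e : S} (hg : g ∈ maxSubgroup e)
    (hu : u * u⁻¹ = e) : (g * u)⁻¹ * (g * u) = u⁻¹ * u := by
  calc (g * u)⁻¹ * (g * u) = u⁻¹ * (g⁻¹ * g) * u := by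
        rw [InverseSemigroup.mul_inv_rev]; simp only [mul_assoc]
    _ = u⁻¹ * u := by rw [hg.2, ← hu, ← mul_assoc, inv_mul_inv]

theorem isInvSub_maxSubgroup (e : S) : IsInvSub (maxSubgroup e) := by
  refine ⟨fun a ha b hb => ⟨mul_mul_inv_of_mem_maxSubgroup ha hb.1, ?_⟩, fun a ha => ?_⟩
  · rw [inv_mul_of_mem_maxSubgroup ha hb.1, hb.2]
  · exact ⟨by rw [inv_invol, ha.2], by rw [inv_invol, ha.1]⟩

open Classical in
noncomputable def rep (T : Set S) (e f : S) : S :=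
  if h : ∃ r ∈ T, r * r⁻¹ = e ∧ r⁻¹ * r = f then h.choose else e

theorem rep_spec {T : Set S} {e f : S} (h : ∃ r ∈ T, r * r⁻¹ = e ∧ r⁻¹ * r = f) :
    rep T e f ∈ T ∧ rep T e f * (rep T e f)⁻¹ = e ∧ (rep T e f)⁻¹ * rep T e f = f := by
  rw [rep, dif_pos h]
  exact h.choose_spec

theorem invFG_of_invFG_inter_maxSubgroup (hE : {e : S | IsIdempotentElem e}.Finite) {T : Set S}
    (hT : IsInvSub T) (hH : ∀ e ∈ T, IsIdempotentElem e → InvFG (T ∩ maxSubgroup e)) :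
    InvFG T := by
  choose! gens hgensT hgens using hH
  set E := {e : S | IsIdempotentElem e}
  set G : Set S :=
    (fun p : S × S => rep T p.1 p.2) '' (E ×ˢ E) ∩ T ∪ ⋃ e ∈ E ∩ T, (gens e : Set S)
  have hG : G.Finite := (((hE.prod hE).image _).inter_of_left T).union <|
    (hE.inter_of_left T).biUnion fun e _ => (gens e).finite_toSet
  have hGT : G ⊆ T := Set.union_subset Set.inter_subset_right <|
    Set.iUnion₂_subset fun e he => (hgensT e he.2 he.1).trans Set.inter_subset_left
  refine invFG_of_finite hG hGT hT fun t ht => ?_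
  obtain ⟨hrT, hr, hr'⟩ := rep_spec (T := T) ⟨t, ht, rfl, rfl⟩
  set r := rep T (t * t⁻¹) (t⁻¹ * t)
  have hf : t⁻¹ * t ∈ E ∩ T := ⟨isIdempotentElem_inv_mul t, hT.1 _ (hT.2 _ ht) _ ht⟩
  have hq : r⁻¹ * t ∈ T ∩ maxSubgroup (t⁻¹ * t) :=
    ⟨hT.1 _ (hT.2 _ hrT) _ ht, inv_mul_mem_maxSubgroup hr' rfl hr⟩
  rw [hgens _ hf.2 hf.1] at hq
  have ht_eq : t = r * (r⁻¹ * t) := by rw [← mul_assoc, hr, mul_inv_mul]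
  rw [ht_eq]
  have hrG : r ∈ G := .inl ⟨⟨(t * t⁻¹, t⁻¹ * t), ⟨isIdempotentElem_mul_inv t, hf.1⟩, rfl⟩, hrT⟩
  exact .mul (.base hrG)
    (hq.mono (Set.subset_union_of_subset_right (Set.subset_biUnion_of_mem hf) _))

-- The indices range over all idempotents; intersecting with `T ∩ H_e` keeps the useful products.
def schreierGens (T X : Set S) (e : S) : Set S :=
  ((fun p : S × S × S => rep T e p.1 * p.2.1 * (rep T e p.2.2)⁻¹) ''
      ({f | IsIdempotentElem f} ×ˢ (X ∪ (·⁻¹) '' X) ×ˢ {f | IsIdempotentElem f}) ∪ {rep T e e}) ∩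
    (T ∩ maxSubgroup e)

theorem finite_schreierGens (hE : {e : S | IsIdempotentElem e}.Finite) {T X : Set S}
    (hX : X.Finite) (e : S) : (schreierGens T X e).Finite :=
  (((hE.prod ((hX.union (hX.image _)).prod hE)).image _).union
    (Set.finite_singleton _)).inter_of_left _

noncomputable def schreierQuot (T : Set S) (e u : S) : S := u * (rep T e (u⁻¹ * u))⁻¹

section Schreier

variable {T X : Set S} {e : S}

theorem schreierQuot_mul_rep {u : S} (hu : u ∈ T) (hue : u * u⁻¹ = e) :
    schreierQuot T e u * rep T e (u⁻¹ * u) = u :=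
  mul_inv_mul_of_inv_mul_eq (rep_spec ⟨u, hu, hue, rfl⟩).2.2.symm

theorem schreierQuot_mul {u : S} (hu : u ∈ T) (hue : u * u⁻¹ = e) (y : S) :
    schreierQuot T e (u * y) =
      schreierQuot T e u * (rep T e (u⁻¹ * u) * y * (rep T e ((u * y)⁻¹ * (u * y)))⁻¹) := by
  rw [← mul_assoc, ← mul_assoc, schreierQuot_mul_rep hu hue, schreierQuot]

theorem rep_mul_mul_inv_mem_schreierGens (hT : IsInvSub T) {u y : S} (hu : u ∈ T)
    (hue : u * u⁻¹ = e) (hy : y ∈ X ∪ (·⁻¹) '' X) (hyT : y ∈ T) (huy : u * y * (u * y)⁻¹ = e) :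
    rep T e (u⁻¹ * u) * y * (rep T e ((u * y)⁻¹ * (u * y)))⁻¹ ∈ schreierGens T X e := by
  obtain ⟨hρT, hρ, hρ'⟩ := rep_spec ⟨u, hu, hue, rfl⟩
  obtain ⟨hσT, hσ, hσ'⟩ := rep_spec ⟨u * y, hT.1 _ hu _ hyT, huy, rfl⟩
  set ρ := rep T e (u⁻¹ * u)
  have hg : ρ * u⁻¹ ∈ maxSubgroup e := mul_inv_mem_maxSubgroup hρ hue hρ'
  have hρy : ρ * y = ρ * u⁻¹ * (u * y) := by
    rw [← mul_assoc, mul_assoc ρ, ← hρ', ← mul_assoc ρ, mul_inv_mul]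
  refine ⟨Or.inl ⟨(u⁻¹ * u, y, (u * y)⁻¹ * (u * y)),
      ⟨isIdempotentElem_inv_mul u, hy, isIdempotentElem_inv_mul _⟩, rfl⟩,
    hT.1 _ (hT.1 _ hρT _ hyT) _ (hT.2 _ hσT), ?_⟩
  refine mul_inv_mem_maxSubgroup (by rw [hρy]; exact mul_mul_inv_of_mem_maxSubgroup hg huy) hσ ?_
  rw [hρy, inv_mul_of_mem_maxSubgroup hg huy, hσ']

def PreservesSchreierQuot (T Z : Set S) (e t : S) : Prop :=
  ∀ u ∈ T, u * u⁻¹ = e → u * t * (u * t)⁻¹ = e →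
    InvGen Z (schreierQuot T e u) → InvGen Z (schreierQuot T e (u * t))

theorem preservesSchreierQuot_of_mem (hT : IsInvSub T) {y : S} (hy : y ∈ X ∪ (·⁻¹) '' X)
    (hyT : y ∈ T) : PreservesSchreierQuot T (schreierGens T X e) e y := by
  intro u hu hue huy hq
  rw [schreierQuot_mul hu hue]
  exact hq.mul (.base (rep_mul_mul_inv_mem_schreierGens hT hu hue hy hyT huy))

theorem PreservesSchreierQuot.mul {Z : Set S} {a b : S} (hT : IsInvSub T)
    (he : IsIdempotentElem e) (haT : a ∈ T) (ha : PreservesSchreierQuot T Z e a)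
    (hb : PreservesSchreierQuot T Z e b) : PreservesSchreierQuot T Z e (a * b) := by
  intro u hu hue hab hq
  rw [← mul_assoc] at hab ⊢
  have hua : u * a * (u * a)⁻¹ = e :=
    mul_inv_eq_of_mul_mul_inv_eq he (by rw [← mul_assoc, ← hue, mul_inv_mul]) hab
  exact hb _ (hT.1 _ hu _ haT) hua hab (ha u hu hue hua hq)

theorem preservesSchreierQuot_of_invGen (hT : IsInvSub T) (hXT : X ⊆ T)
    (he : IsIdempotentElem e) {t : S} (ht : InvGen X t) :
    PreservesSchreierQuot T (schreierGens T X e) e t ∧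
      PreservesSchreierQuot T (schreierGens T X e) e t⁻¹ := by
  induction ht with
  | base hx =>
    exact ⟨preservesSchreierQuot_of_mem hT (.inl hx) (hXT hx),
      preservesSchreierQuot_of_mem hT (.inr ⟨_, hx, rfl⟩) (hT.2 _ (hXT hx))⟩
  | mul ha hb iha ihb =>
    refine ⟨iha.1.mul hT he (ha.mem hXT hT) ihb.1, ?_⟩
    rw [InverseSemigroup.mul_inv_rev]
    exact ihb.2.mul hT he (hT.2 _ (hb.mem hXT hT)) iha.2
  | inv _ ih =>
    rw [inv_invol]
    exact ih.symm

end Schreier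

theorem invFG_inter_maxSubgroup (hE : {e : S | IsIdempotentElem e}.Finite) {T : Set S}
    (hT : IsInvSub T) (hfg : InvFG T) {e : S} (heT : e ∈ T) (he : IsIdempotentElem e) :
    InvFG (T ∩ maxSubgroup e) := by
  obtain ⟨X, hXT, hTX⟩ := hfg
  have heH : e ∈ maxSubgroup e :=
    ⟨mul_inv_of_isIdempotentElem he, by rw [inv_eq_self_of_isIdempotentElem he, he]⟩
  have hleft : ∀ {g}, g ∈ maxSubgroup e → e * g = g := fun hg => by rw [← hg.1, mul_inv_mul]
  obtain ⟨hρT, hρH⟩ : rep T e e ∈ T ∩ maxSubgroup e := by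
    obtain ⟨h1, h2, h3⟩ := rep_spec ⟨e, heT, heH.1, heH.2⟩
    exact ⟨h1, h2, h3⟩
  have hρZ : rep T e e ∈ schreierGens T (X : Set S) e := ⟨.inr rfl, hρT, hρH⟩
  refine invFG_of_finite (finite_schreierGens hE X.finite_toSet e) Set.inter_subset_right
    (hT.inter_s4 (isInvSub_maxSubgroup e)) fun t ⟨ht, htH⟩ => ?_
  have hstart : InvGen (schreierGens T X e) (schreierQuot T e e) := by
    rw [schreierQuot, heH.2, hleft ((isInvSub_maxSubgroup e).2 _ hρH)]
    exact .inv (.base hρZ)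
  have hquot := (preservesSchreierQuot_of_invGen hT hXT he (by rw [hTX] at ht; exact ht)).1
    e heT heH.1 (by rw [hleft htH]; exact htH.1) hstart
  rw [hleft htH] at hquot
  rw [← schreierQuot_mul_rep ht htH.1, htH.2]
  exact hquot.mul (.base hρZ)

end InverseSemigroup

theorem stmt_4 {S : Type*} [InverseSemigroup S] (hE : {e : S | e * e = e}.Finite) :
    Howson S ↔ ∀ e : S, e * e = e → HowsonOn {s : S | s * s⁻¹ = e ∧ s⁻¹ * s = e} := by
  open InverseSemigroup in
  refine ⟨fun hS _ _ U V _ _ => hS U V, fun hH U V hU hV hUfg hVfg => ?_⟩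
  refine invFG_of_invFG_inter_maxSubgroup hE (hU.inter_s4 hV) fun e he hee => ?_
  rw [Set.inter_inter_distrib_right]
  exact hH e hee _ _ Set.inter_subset_right Set.inter_subset_right
    (hU.inter_s4 (isInvSub_maxSubgroup e)) (hV.inter_s4 (isInvSub_maxSubgroup e))
    (invFG_inter_maxSubgroup hE hU hUfg he.1 hee) (invFG_inter_maxSubgroup hE hV hVfg he.2 hee)
end
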